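/- Let $M \in \mathbb{C}^{n\times n}$ be partitioned as $M = \begin{bmatrix} m_{00} & m_{01} \\ m_{10} & M_{11} \end{bmatrix}$ with $m_{00} \in \mathbb{C}$, where $M_{11} \in \mathbb{C}^{(n-1)\times(n-1)}$ is invertible. Let $m_0$ denote the first column of $M$ and $M_{-0}$ the matrix of the remaining $n-1$ columns. Then the Euclidean distance from $m_0$ to the column span of $M_{-0}$ equals $\frac{|m_{00} - m_{01} M_{11}^{-1} m_{10}|}{\sqrt{1 + \|m_{01} M_{11}^{-1}\|^2}}$. -/

import Mathlib

open Matrix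

/-- View a finitely supported complex vector as an element of Euclidean space. -/
noncomputable def toE {k : ℕ} (v : Fin k → ℂ) : EuclideanSpace ℂ (Fin k) :=
  (WithLp.equiv 2 (Fin k → ℂ)).symm v

@[simp] lemma toE_apply {k : ℕ} (v : Fin k → ℂ) (i : Fin k) : toE v i = v i := rfl

theorem dist_first_column_to_span (k : ℕ) (m00 : ℂ) (m01 m10 : Fin k → ℂ)
    (M11 : Matrix (Fin k) (Fin k) ℂ) (hM11 : IsUnit M11.det) :
    Metric.infDist (toE (Fin.cons m00 m10))
      (Submodule.span ℂ
        (Set.range fun j : Fin k => toE (Fin.cons (m01 j) (fun i => M11 i j))) : Set _)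
      = ‖m00 - ∑ j, (∑ i, m01 i * M11⁻¹ i j) * m10 j‖ /
          Real.sqrt (1 + ∑ j, ‖∑ i, m01 i * M11⁻¹ i j‖ ^ 2) := by
  classical
  set c : Fin k → ℂ := fun j => ∑ i, m01 i * M11⁻¹ i j with hc
  set v : Fin k → EuclideanSpace ℂ (Fin (k+1)) :=
    fun j => toE (Fin.cons (m01 j) (fun i => M11 i j)) with hv
  set K : Submodule ℂ (EuclideanSpace ℂ (Fin (k+1))) := Submodule.span ℂ (Set.range v) with hK
  set x : EuclideanSpace ℂ (Fin (k+1)) := toE (Fin.cons m00 m10) with hx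
  set w : EuclideanSpace ℂ (Fin (k+1)) :=
    toE (Fin.cons 1 (fun j => -(starRingEnd ℂ (c j)))) with hw
  -- c is the vector m01 * M11⁻¹, hence c * M11 = m01
  have h_m01 : ∀ j, (∑ i, c i * M11 i j) = m01 j := by
    intro j
    have hcv : c = m01 ᵥ* M11⁻¹ := by
      funext i; simp [hc, Matrix.vecMul, dotProduct]
    have hmul : c ᵥ* M11 = m01 := by
      rw [hcv, Matrix.vecMul_vecMul, Matrix.nonsing_inv_mul M11 hM11, Matrix.vecMul_one]
    have := congrFun hmul j
    simpa [Matrix.vecMul, dotProduct] using this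
  -- w is orthogonal to each v j
  have hinner : ∀ j, (inner ℂ (v j) w : ℂ) = 0 := by
    intro j
    have hconj : (∑ i, (starRingEnd ℂ) (M11 i j) * (starRingEnd ℂ) (c i))
        = (starRingEnd ℂ) (m01 j) := by
      rw [← h_m01 j, map_sum]
      exact Finset.sum_congr rfl (by intro i _; rw [_root_.map_mul, mul_comm])
    simp only [PiLp.inner_apply, RCLike.inner_apply']
    rw [Fin.sum_univ_succ]
    simp only [hv, hw, toE_apply, Fin.cons_zero, Fin.cons_succ, mul_one, mul_neg]
    rw [Finset.sum_neg_distrib, hconj]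
    ring
  have hw0 : w ≠ 0 := by
    intro h
    have h0 := congrArg (fun z : EuclideanSpace ℂ (Fin (k+1)) => z 0) h
    simp [hw] at h0
  -- linear independence of the columns
  have hli : LinearIndependent ℂ v := by
    have hM : IsUnit M11 := (Matrix.isUnit_iff_isUnit_det M11).mpr hM11
    have h1 : LinearIndependent ℂ (fun j => M11ᵀ j) :=
      Matrix.linearIndependent_cols_iff_isUnit.mpr hM
    let f : EuclideanSpace ℂ (Fin (k+1)) →ₗ[ℂ] (Fin k → ℂ) :=
      (LinearMap.funLeft ℂ ℂ Fin.succ).comp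
        (WithLp.linearEquiv 2 ℂ (Fin (k+1) → ℂ)).toLinearMap
    apply LinearIndependent.of_comp f
    have hfv : (f ∘ v) = fun j => M11ᵀ j := by
      funext j; funext i
      simp [f, hv, LinearMap.funLeft, Matrix.transpose_apply, toE]
    rw [hfv]
    exact h1
  have hfinK : Module.finrank ℂ K = k := by
    rw [hK, finrank_span_eq_card hli, Fintype.card_fin]
  -- the orthogonal complement of K is spanned by w
  have hle : (ℂ ∙ w) ≤ Kᗮ := by
    have h1 : K ≤ (ℂ ∙ w)ᗮ := by
      rw [hK, Submodule.span_le]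
      rintro _ ⟨j, rfl⟩
      exact Submodule.mem_orthogonal_singleton_iff_inner_left.mpr (hinner j)
    exact le_trans (Submodule.le_orthogonal_orthogonal _) (Submodule.orthogonal_le h1)
  have hKperp : Kᗮ = (ℂ ∙ w) := by
    refine (Submodule.eq_of_le_of_finrank_le hle ?_).symm
    rw [finrank_span_singleton hw0]
    have h2 := Submodule.finrank_add_finrank_orthogonal K
    rw [finrank_euclideanSpace, Fintype.card_fin, hfinK] at h2
    omega
  -- inner product and norm computations
  have hwx : (inner ℂ w x : ℂ) = m00 - ∑ j, c j * m10 j := by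
    simp only [PiLp.inner_apply, RCLike.inner_apply']
    rw [Fin.sum_univ_succ]
    simp only [hw, hx, toE_apply, Fin.cons_zero, Fin.cons_succ, map_neg,
      Complex.conj_conj, neg_mul]
    rw [Finset.sum_neg_distrib]
    simp [sub_eq_add_neg]
  have hnw : ‖w‖ = Real.sqrt (1 + ∑ j, ‖c j‖ ^ 2) := by
    rw [EuclideanSpace.norm_eq]
    congr 1
    rw [Fin.sum_univ_succ]
    simp [hw]
  have hnw_pos : (0:ℝ) < ‖w‖ := norm_pos_iff.mpr hw0
  -- main computation
  have hproj : Metric.infDist x (K : Set _) = ‖x - K.starProjection x‖ := by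
    rw [Metric.infDist_eq_iInf, Submodule.starProjection_minimal]
    simp_rw [dist_eq_norm]
    rfl
  have h2 : ‖w‖ ≠ 0 := ne_of_gt hnw_pos
  have hsp : Kᗮ.starProjection x = (ℂ ∙ w).starProjection x := by simp only [hKperp]
  rw [hproj, ← Submodule.starProjection_orthogonal_val, hsp,
    Submodule.starProjection_singleton, norm_smul, hwx, ← hnw]
  simp only [norm_div, RCLike.norm_ofReal, abs_pow, abs_norm]
  rw [sq, ← div_div, div_mul_cancel₀ _ h2]
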